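/- arXiv:2204.11603 — 2 statements merged into one kernel-verified Lean document; each statement's English description precedes it below -/
import Mathlib

section
/- Let $\mu$ and $\nu$ be positive measures on $\mathbb{C}$ of finite upper density. Suppose there exists an unbounded increasing sequence $(r_n)_{n\ge 1}$ in $(0,+\infty)$ with $\limsup_{n\to\infty} r_{n+1}/r_n < +\infty$ such that $\limsup_{N\to\infty} \sup_{0 \le n < N} \big(\ell_\nu(r_n, r_N) - \ell_\mu(r_n, r_N)\big) < +\infty$. Then for every $r_0 > 0$, $\sup_{r_0 \le r < R < +\infty} \big(\ell_\nu(r,R) - \ell_\mu(r,R)\big) < +\infty$. -/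
open MeasureTheory Filter

/-- The annulus `{z : r < |z| ≤ R}` in `ℂ`. -/
def annulus (r R : ℝ) : Set ℂ := {z : ℂ | r < ‖z‖ ∧ ‖z‖ ≤ R}

/-- Right logarithmic function of intervals: `∫_{r<|z|≤R} Re⁺(1/z) dν`. -/
noncomputable def ellP (ν : Measure ℂ) (r R : ℝ) : ℝ :=
  ∫ z in annulus r R, max (1 / z).re 0 ∂ν

/-- Left logarithmic function of intervals: `∫_{r<|z|≤R} Re⁻(1/z) dν`. -/
noncomputable def ellM (ν : Measure ℂ) (r R : ℝ) : ℝ :=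
  ∫ z in annulus r R, max (-(1 / z).re) 0 ∂ν

/-- The logarithmic submeasure `ℓ_ν(r,R)`. -/
noncomputable def ell (ν : Measure ℂ) (r R : ℝ) : ℝ := max (ellP ν r R) (ellM ν r R)

/-- Radial counting function `ν^rad(t) = ν(t·𝔻̄)`. -/
noncomputable def rad (ν : Measure ℂ) (t : ℝ) : ℝ := (ν (Metric.closedBall 0 t)).toReal

/-- Finite upper density: `limsup_{t→∞} ν^rad(t)/t < +∞`. -/
def FiniteUpperDensity (ν : Measure ℂ) : Prop := ∃ C : ℝ, ∀ᶠ t in atTop, rad ν t ≤ C * t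

/-!
Both integrands defining `ℓ_ν` are nonnegative and bounded by `1/|z|`, so `ℓ_ν` is
subadditive over adjacent annuli, monotone under inclusion of annuli, and
`ℓ_ν(a, b) ≤ ν^rad(b)/a`; with finite upper density the last bound is `O(1)` on
every annulus of bounded ratio `b/a`. Given `r₀ ≤ s < R`, bracket them by the
sequence as `s < r_n ≤ A s` and `r_N ≤ R < r_{N+1} ≤ A r_N`. Then `ℓ_ν(s, R)` splits
into `ℓ_ν(r_n, r_N) ≤ ℓ_μ(r_n, r_N) + B ≤ ℓ_μ(s, R) + B` and two annuli of ratio at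
most `A`, each contributing `O(1)`.
-/

lemma annulus_eq_preimage (a b : ℝ) : annulus a b = norm ⁻¹' Set.Ioc a b := rfl

lemma measurableSet_annulus (a b : ℝ) : MeasurableSet (annulus a b) :=
  measurable_norm measurableSet_Ioc

lemma annulus_subset_closedBall (a b : ℝ) : annulus a b ⊆ Metric.closedBall 0 b :=
  fun _ hz => mem_closedBall_zero_iff.2 hz.2

lemma annulus_union_annulus {a b c : ℝ} (hab : a ≤ b) (hbc : b ≤ c) :
    annulus a b ∪ annulus b c = annulus a c := by
  simp only [annulus_eq_preimage, ← Set.preimage_union, Set.Ioc_union_Ioc_eq_Ioc hab hbc]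

lemma disjoint_annulus_annulus (a b c : ℝ) : Disjoint (annulus a b) (annulus b c) :=
  (Set.Ioc_disjoint_Ioc_of_le le_rfl).preimage _

lemma annulus_self (a : ℝ) : annulus a a = ∅ := by
  simp only [annulus_eq_preimage, Set.Ioc_self, Set.preimage_empty]

lemma measure_annulus_lt_top (ν : Measure ℂ) [IsFiniteMeasureOnCompacts ν] (a b : ℝ) :
    ν (annulus a b) < ⊤ :=
  (measure_mono (annulus_subset_closedBall a b)).trans_lt (isCompact_closedBall 0 b).measure_lt_top

lemma rad_mono (ν : Measure ℂ) [IsFiniteMeasureOnCompacts ν] : Monotone (rad ν) :=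
  fun _ b h => ENNReal.toReal_mono (isCompact_closedBall (0 : ℂ) b).measure_lt_top.ne
    (measure_mono (Metric.closedBall_subset_closedBall h))

section Integrand

variable {g : ℂ → ℝ} (hgm : Measurable g) (hg : ∀ z, g z ∈ Set.Icc 0 ‖z‖⁻¹)
  (ν : Measure ℂ) [IsFiniteMeasureOnCompacts ν] {a b c : ℝ}
include hgm hg

lemma integrableOn_annulus (ha : 0 < a) : IntegrableOn g (annulus a b) ν := by
  refine Measure.integrableOn_of_bounded (M := a⁻¹) (measure_annulus_lt_top ν a b).ne
    hgm.aestronglyMeasurable ?_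
  filter_upwards [ae_restrict_mem (measurableSet_annulus a b)] with z hz
  rw [Real.norm_of_nonneg (hg z).1]
  exact (hg z).2.trans (inv_anti₀ ha hz.1.le)

lemma setIntegral_annulus_le_rad_div (ha : 0 < a) :
    ∫ z in annulus a b, g z ∂ν ≤ rad ν b / a := by
  calc ∫ z in annulus a b, g z ∂ν ≤ ∫ _ in annulus a b, a⁻¹ ∂ν :=
        setIntegral_mono_on (integrableOn_annulus hgm hg ν ha)
          (integrableOn_const (measure_annulus_lt_top ν a b).ne) (measurableSet_annulus a b)
          fun z hz => (hg z).2.trans (inv_anti₀ ha hz.1.le)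
    _ = (ν (annulus a b)).toReal / a := by
        rw [setIntegral_const, smul_eq_mul, div_eq_mul_inv, measureReal_def]
    _ ≤ rad ν b / a := by
        gcongr
        exact ENNReal.toReal_mono (isCompact_closedBall (0 : ℂ) b).measure_lt_top.ne
          (measure_mono (annulus_subset_closedBall a b))

lemma setIntegral_annulus_add (ha : 0 < a) (hab : a ≤ b) (hbc : b ≤ c) :
    ∫ z in annulus a c, g z ∂ν =
      (∫ z in annulus a b, g z ∂ν) + ∫ z in annulus b c, g z ∂ν := by
  rw [← annulus_union_annulus hab hbc]
  exact setIntegral_union (disjoint_annulus_annulus a b c) (measurableSet_annulus b c)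
    (integrableOn_annulus hgm hg ν ha) (integrableOn_annulus hgm hg ν (ha.trans_le hab))

lemma setIntegral_annulus_mono {a' b' : ℝ} (ha : 0 < a) (haa' : a ≤ a') (hbb' : b' ≤ b) :
    ∫ z in annulus a' b', g z ∂ν ≤ ∫ z in annulus a b, g z ∂ν :=
  setIntegral_mono_set (integrableOn_annulus hgm hg ν ha) (.of_forall fun z => (hg z).1)
    (LE.le.eventuallyLE fun _ hz => ⟨haa'.trans_lt hz.1, hz.2.trans hbb'⟩)

end Integrand

lemma abs_re_one_div_le (z : ℂ) : |(1 / z).re| ≤ ‖z‖⁻¹ := by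
  simpa only [one_div, norm_inv] using Complex.abs_re_le_norm (1 / z)

lemma measurable_max_re_one_div : Measurable fun z : ℂ => max (1 / z).re 0 := by
  fun_prop

lemma measurable_max_neg_re_one_div : Measurable fun z : ℂ => max (-(1 / z).re) 0 := by
  fun_prop

lemma max_re_one_div_mem_Icc (z : ℂ) : max (1 / z).re 0 ∈ Set.Icc 0 ‖z‖⁻¹ :=
  ⟨le_max_right _ _, max_le ((le_abs_self _).trans (abs_re_one_div_le z)) (by positivity)⟩

lemma max_neg_re_one_div_mem_Icc (z : ℂ) : max (-(1 / z).re) 0 ∈ Set.Icc 0 ‖z‖⁻¹ :=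
  ⟨le_max_right _ _, max_le ((neg_le_abs _).trans (abs_re_one_div_le z)) (by positivity)⟩

section Ell

variable (ν : Measure ℂ)

lemma ell_nonneg (a b : ℝ) : 0 ≤ ell ν a b :=
  le_max_of_le_left <| setIntegral_nonneg (measurableSet_annulus a b) fun _ _ => le_max_right _ _

lemma ell_self (a : ℝ) : ell ν a a = 0 := by
  simp only [ell, ellP, ellM, annulus_self, Measure.restrict_empty, integral_zero_measure, max_self]

variable [IsFiniteMeasureOnCompacts ν] {a b c : ℝ}

lemma ell_le_rad_div (ha : 0 < a) : ell ν a b ≤ rad ν b / a :=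
  max_le
    (setIntegral_annulus_le_rad_div measurable_max_re_one_div max_re_one_div_mem_Icc ν ha)
    (setIntegral_annulus_le_rad_div measurable_max_neg_re_one_div max_neg_re_one_div_mem_Icc ν
      ha)

lemma ell_le_add (ha : 0 < a) (hab : a ≤ b) (hbc : b ≤ c) :
    ell ν a c ≤ ell ν a b + ell ν b c := by
  refine max_le ?_ ?_
  · rw [ellP, setIntegral_annulus_add measurable_max_re_one_div max_re_one_div_mem_Icc ν ha
      hab hbc]
    exact add_le_add (le_max_left _ _) (le_max_left _ _)
  · rw [ellM, setIntegral_annulus_add measurable_max_neg_re_one_div max_neg_re_one_div_mem_Icc ν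
      ha hab hbc]
    exact add_le_add (le_max_right _ _) (le_max_right _ _)

lemma ell_mono {a' b' : ℝ} (ha : 0 < a) (haa' : a ≤ a') (hbb' : b' ≤ b) :
    ell ν a' b' ≤ ell ν a b :=
  max_le_max
    (setIntegral_annulus_mono measurable_max_re_one_div max_re_one_div_mem_Icc ν ha haa' hbb')
    (setIntegral_annulus_mono measurable_max_neg_re_one_div max_neg_re_one_div_mem_Icc ν ha
      haa' hbb')

lemma ell_le_mul_of_le_mul {D K : ℝ} (hD : 0 ≤ D) (ha : 0 < a) (hrad : rad ν b ≤ D * b)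
    (hb : b ≤ K * a) : ell ν a b ≤ D * K :=
  calc ell ν a b ≤ rad ν b / a := ell_le_rad_div ν ha
    _ ≤ D * (K * a) / a := by gcongr; exact hrad.trans (by gcongr)
    _ = D * K := by field_simp

end Ell

lemma FiniteUpperDensity.exists_rad_le_mul {ν : Measure ℂ} [IsFiniteMeasureOnCompacts ν]
    (h : FiniteUpperDensity ν) {r0 : ℝ} (hr0 : 0 < r0) :
    ∃ D, 0 ≤ D ∧ ∀ t, r0 ≤ t → rad ν t ≤ D * t := by
  obtain ⟨C, hC⟩ := h
  obtain ⟨T, hT⟩ := eventually_atTop.mp hC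
  set T' := max T r0
  have hK : 0 ≤ rad ν T' / r0 := div_nonneg ENNReal.toReal_nonneg hr0.le
  refine ⟨max C (rad ν T' / r0), hK.trans (le_max_right _ _), fun t ht => ?_⟩
  rcases le_total T' t with hTt | htT
  · have ht0 : 0 ≤ t := hr0.le.trans ht
    exact (hT t ((le_max_left _ _).trans hTt)).trans (by gcongr; exact le_max_left _ _)
  · calc rad ν t ≤ rad ν T' := rad_mono ν htT
      _ = rad ν T' / r0 * r0 := (div_mul_cancel₀ _ hr0.ne').symm
      _ ≤ max C (rad ν T' / r0) * t := by gcongr; exact le_max_right _ _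

section Sequence

variable {r : ℕ → ℝ} {A : ℝ}

lemma exists_ge_forall_succ_le_mul (hpos : ∀ n, 0 < r n)
    (h : ∃ A, ∀ᶠ n in atTop, r (n + 1) / r n ≤ A) (c : ℝ) :
    ∃ A, c ≤ A ∧ ∀ n, r (n + 1) ≤ A * r n := by
  obtain ⟨A₀, hA₀⟩ := h
  obtain ⟨M, hM⟩ := (isBoundedUnder_of_eventually_le hA₀).bddAbove_range
  refine ⟨max c M, le_max_left _ _, fun n => ?_⟩
  rw [← div_le_iff₀ (hpos n)]
  exact (hM ⟨n, rfl⟩).trans (le_max_right _ _)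

lemma exists_lt_le_mul (hunb : Tendsto r atTop atTop) (hA : ∀ n, r (n + 1) ≤ A * r n)
    (hA0 : 0 ≤ A) {s : ℝ} (h0 : r 0 ≤ A * s) : ∃ n, s < r n ∧ r n ≤ A * s := by
  have hex : ∃ n, s < r n := (hunb.eventually_gt_atTop s).exists
  obtain ⟨n, hsn, hmin⟩ : ∃ n, s < r n ∧ ∀ m < n, ¬ s < r m :=
    ⟨_, Nat.find_spec hex, fun _ => Nat.find_min hex⟩
  refine ⟨n, hsn, ?_⟩
  cases n with
  | zero => exact h0
  | succ k => exact (hA k).trans (by gcongr; exact not_lt.1 (hmin k k.lt_succ_self))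

lemma exists_le_lt_succ (hmono : Monotone r) (hunb : Tendsto r atTop atTop) {N₀ : ℕ} {R : ℝ}
    (hR : r N₀ ≤ R) : ∃ N, N₀ ≤ N ∧ r N ≤ R ∧ R < r (N + 1) := by
  have hex : ∃ n, R < r n := (hunb.eventually_gt_atTop R).exists
  obtain ⟨n, hRn, hmin⟩ : ∃ n, R < r n ∧ ∀ m < n, ¬ R < r m :=
    ⟨_, Nat.find_spec hex, fun _ => Nat.find_min hex⟩
  have hN₀n : N₀ < n := lt_of_not_ge fun hn => (hmono hn).trans hR |>.not_gt hRn
  cases n with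
  | zero => exact absurd hN₀n (Nat.not_lt_zero _)
  | succ N => exact ⟨N, by omega, not_lt.1 (hmin N N.lt_succ_self), hRn⟩

end Sequence

lemma ell_sub_ell_le_of_bracket (μ ν : Measure ℂ) [IsFiniteMeasureOnCompacts μ]
    [IsFiniteMeasureOnCompacts ν] {r : ℕ → ℝ} (hpos : ∀ n, 0 < r n) (hmono : Monotone r)
    {A B D s R : ℝ} (hA : ∀ n, r (n + 1) ≤ A * r n) (hA0 : 0 ≤ A) (hD : 0 ≤ D)
    (hs0 : 0 < s) (hsR : s < R) (hrad : ∀ t, s ≤ t → rad ν t ≤ D * t) {n N : ℕ}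
    (hsn : s < r n) (hnA : r n ≤ A * s) (hNR : r N ≤ R) (hRN : R < r (N + 1))
    (hB : ∀ m < N, ell ν (r m) (r N) - ell μ (r m) (r N) ≤ B) :
    ell ν s R - ell μ s R ≤ 2 * (D * A) + max B 0 := by
  have hμ : 0 ≤ ell μ s R := ell_nonneg μ s R
  have hDA : 0 ≤ D * A := mul_nonneg hD hA0
  have hradR : rad ν R ≤ D * R := hrad R hsR.le
  rcases lt_or_ge N n with hNn | hnN
  · have := ell_le_mul_of_le_mul ν hD hs0 hradR ((hRN.trans_le (hmono hNn)).le.trans hnA)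
    linarith [le_max_right B 0]
  have hleft : ell ν s (r n) ≤ D * A :=
    ell_le_mul_of_le_mul ν hD hs0 (hrad _ hsn.le) hnA
  have hright : ell ν (r N) R ≤ D * A :=
    ell_le_mul_of_le_mul ν hD (hpos N) hradR (hRN.le.trans (hA N))
  have hmid : ell ν (r n) (r N) - ell μ (r n) (r N) ≤ max B 0 := by
    rcases hnN.lt_or_eq with hlt | rfl
    · exact (hB n hlt).trans (le_max_left _ _)
    · rw [ell_self, ell_self, sub_zero]; exact le_max_right _ _
  have hsplit : ell ν s R ≤ ell ν s (r n) + ell ν (r n) (r N) + ell ν (r N) R := by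
    linarith [ell_le_add ν hs0 hsn.le ((hmono hnN).trans hNR),
      ell_le_add ν (hpos n) (hmono hnN) hNR]
  linarith [ell_mono μ hs0 hsn.le hNR]

theorem stmt7_general (μ ν : Measure ℂ)
    [IsFiniteMeasureOnCompacts μ] [IsFiniteMeasureOnCompacts ν]
    (hν : FiniteUpperDensity ν)
    (r : ℕ → ℝ) (hpos : ∀ n, 0 < r n) (hmono : Monotone r)
    (hunb : Tendsto r atTop atTop)
    (hratio : ∃ A : ℝ, ∀ᶠ n in atTop, r (n + 1) / r n ≤ A)
    (hsup : ∃ B : ℝ, ∀ᶠ N in atTop, ∀ n < N,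
      ell ν (r n) (r N) - ell μ (r n) (r N) ≤ B) :
    ∀ r0 : ℝ, 0 < r0 → ∃ C : ℝ, ∀ s R : ℝ, r0 ≤ s → s < R →
      ell ν s R - ell μ s R ≤ C := by
  intro r0 hr0
  obtain ⟨D, hD, hrad⟩ := hν.exists_rad_le_mul hr0
  obtain ⟨A, hA_ge, hA⟩ := exists_ge_forall_succ_le_mul hpos hratio (r 0 / r0)
  have hA0 : 0 ≤ A := (div_pos (hpos 0) hr0).le.trans hA_ge
  obtain ⟨B, hB⟩ := hsup
  obtain ⟨N₀, hB⟩ := eventually_atTop.mp hB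
  refine ⟨max (ell ν r0 (r N₀)) (2 * (D * A) + max B 0), fun s R hs hsR => ?_⟩
  have hs0 : 0 < s := hr0.trans_le hs
  rcases le_or_gt R (r N₀) with hRN₀ | hRN₀
  · have := ell_mono ν hr0 hs hRN₀
    linarith [ell_nonneg μ s R, le_max_left (ell ν r0 (r N₀)) (2 * (D * A) + max B 0)]
  obtain ⟨N, hN₀N, hNR, hRN⟩ := exists_le_lt_succ hmono hunb hRN₀.le
  have h0 : r 0 ≤ A * s :=
    calc r 0 = r 0 / r0 * r0 := (div_mul_cancel₀ _ hr0.ne').symm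
      _ ≤ A * s := by gcongr
  obtain ⟨n, hsn, hnA⟩ := exists_lt_le_mul hunb hA hA0 h0
  exact le_max_of_le_right (ell_sub_ell_le_of_bracket μ ν hpos hmono hA hA0 hD hs0 hsR
    (fun t ht => hrad t (hs.trans ht)) hsn hnA hNR hRN (hB N hN₀N))

/-- If along an unbounded increasing sequence `(r_n)` growing no
faster than a geometric progression one has
`limsup_N sup_{n<N} (ℓ_ν(r_n,r_N) - ℓ_μ(r_n,r_N)) < +∞`, then for every
`r₀ > 0`, `sup_{r₀ ≤ r < R} (ℓ_ν(r,R) - ℓ_μ(r,R)) < +∞`. -/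
theorem stmt7 (μ ν : Measure ℂ)
    [IsFiniteMeasureOnCompacts μ] [IsFiniteMeasureOnCompacts ν]
    (hμ : FiniteUpperDensity μ) (hν : FiniteUpperDensity ν)
    (r : ℕ → ℝ) (hpos : ∀ n, 0 < r n) (hmono : Monotone r)
    (hunb : Tendsto r atTop atTop)
    (hratio : ∃ A : ℝ, ∀ᶠ n in atTop, r (n + 1) / r n ≤ A)
    (hsup : ∃ B : ℝ, ∀ᶠ N in atTop, ∀ n < N,
      ell ν (r n) (r N) - ell μ (r n) (r N) ≤ B) :
    ∀ r0 : ℝ, 0 < r0 → ∃ C : ℝ, ∀ s R : ℝ, r0 ≤ s → s < R →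
      ell ν s R - ell μ s R ≤ C :=
  stmt7_general μ ν hν r hpos hmono hunb hratio hsup
end

section
/- Let $\nu$ be a signed measure of finite upper density on $\mathbb{C}$, let $w \in \mathbb{C}$, and let $\nu_{\vec{w}}$ denote the translate of $\nu$ by $w$ (i.e. $\nu_{\vec w}(K) = \nu(K - w)$). Then for any $r_0 > 0$, $\sup_{r \ge r_0} |\ell^{\vdash}_{\nu - \nu_{\vec w}}(r_0, r)| + \sup_{r \ge r_0} |\ell^{\dashv}_{\nu - \nu_{\vec w}}(r_0, r)| < +\infty$. -/
open MeasureTheory Filter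

/-! Both integrands are `ψ(1/z)` with `ψ = max (±Re) 0` Lipschitz and `ψ 0 = 0`, and the signed
measure splits into its two parts, so it suffices to bound `∫ (g z - g (z + w)) dν` for a positive
`ν`, where `g` is `ψ(1/z)` cut off to the annulus `r₀ < |z| ≤ r`. On the disc `|z| ≤ r₀ + 2|w|`
the integrand is at most `2L/r₀`. Outside it, either `z` lies in the shell
`r - |w| < |z| ≤ r + |w|`, where the integrand is `O(1/r)` and `ν` has mass `O(r)`, or `z` and
`z + w` are on the same side of the annulus and the integrand is at most
`L |1/z - 1/(z + w)| ≤ 2L|w|/|z|²`. Finite upper density makes `|z|⁻²` integrable at infinity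
(split into dyadic annuli), so none of the three contributions depends on `r`. -/

open Metric Set
open scoped NNReal

lemma half_norm_le_norm_add {E : Type*} [SeminormedAddCommGroup E] {z w : E}
    (h : 2 * ‖w‖ ≤ ‖z‖) : ‖z‖ / 2 ≤ ‖z + w‖ := by
  linarith [norm_sub_le_norm_add z w]

lemma norm_inv_sub_inv_add_le {𝕜 : Type*} [NormedField 𝕜] {z w : 𝕜} (hz : z ≠ 0)
    (h : 2 * ‖w‖ ≤ ‖z‖) : ‖z⁻¹ - (z + w)⁻¹‖ ≤ 2 * ‖w‖ / ‖z‖ ^ 2 := by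
  have hzw := half_norm_le_norm_add h
  have hz' : 0 < ‖z‖ := norm_pos_iff.2 hz
  have hzw0 : z + w ≠ 0 := norm_pos_iff.1 (by linarith)
  rw [inv_sub_inv hz hzw0, add_sub_cancel_left, norm_div, norm_mul,
    div_le_div_iff₀ (by positivity) (by positivity)]
  nlinarith [mul_le_mul_of_nonneg_left hzw (norm_nonneg w)]

lemma measurableSet_annulus_s9 (r R : ℝ) : MeasurableSet (annulus r R) :=
  (measurableSet_lt measurable_const measurable_norm).inter
    (measurableSet_le measurable_norm measurable_const)

lemma annulus_subset_closedBall_s9 (r R : ℝ) : annulus r R ⊆ closedBall 0 R :=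
  fun _ hz => mem_closedBall_zero_iff.2 hz.2

lemma mem_annulus_add_iff {r₀ r : ℝ} {z w : ℂ} (hz : r₀ + ‖w‖ < ‖z‖)
    (hs : z ∉ annulus (r - ‖w‖) (r + ‖w‖)) : z + w ∈ annulus r₀ r ↔ z ∈ annulus r₀ r := by
  have h₁ := norm_add_le z w
  have h₂ := norm_sub_le_norm_add z w
  simp only [annulus, mem_ofPred_eq, not_and_or, not_lt, not_le] at hs ⊢
  constructor <;> rintro ⟨-, h⟩ <;> refine ⟨by linarith, ?_⟩ <;> rcases hs with hs | hs <;>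
    linarith

namespace LipschitzWith

variable {ψ : ℂ → ℝ} {L : ℝ≥0}

lemma abs_comp_inv_le (hψ : LipschitzWith L ψ) (hψ0 : ψ 0 = 0) (z : ℂ) :
    |ψ z⁻¹| ≤ L / ‖z‖ := by
  simpa [hψ0, Real.dist_eq, div_eq_mul_inv] using hψ.dist_le_mul z⁻¹ 0

lemma abs_comp_inv_sub_comp_inv_add_le (hψ : LipschitzWith L ψ) {z w : ℂ} (hz : z ≠ 0)
    (h : 2 * ‖w‖ ≤ ‖z‖) : |ψ z⁻¹ - ψ (z + w)⁻¹| ≤ 2 * L * ‖w‖ * (‖z‖ ^ 2)⁻¹ :=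
  calc |ψ z⁻¹ - ψ (z + w)⁻¹| ≤ L * ‖z⁻¹ - (z + w)⁻¹‖ := by
        simpa [Real.dist_eq, dist_eq_norm] using hψ.dist_le_mul z⁻¹ (z + w)⁻¹
    _ ≤ L * (2 * ‖w‖ / ‖z‖ ^ 2) := by gcongr; exact norm_inv_sub_inv_add_le hz h
    _ = 2 * L * ‖w‖ * (‖z‖ ^ 2)⁻¹ := by ring

lemma abs_indicator_annulus_le (hψ : LipschitzWith L ψ) (hψ0 : ψ 0 = 0) {r₀ : ℝ}
    (hr₀ : 0 < r₀) (r : ℝ) (z : ℂ) :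
    |(annulus r₀ r).indicator (fun z => ψ z⁻¹) z| ≤ L / r₀ := by
  by_cases hz : z ∈ annulus r₀ r
  · rw [indicator_of_mem hz]
    exact (hψ.abs_comp_inv_le hψ0 z).trans (div_le_div_of_nonneg_left L.2 hr₀ hz.1.le)
  · rw [indicator_of_notMem hz, abs_zero]
    positivity

lemma abs_indicator_annulus_sub_le_of_lt (hψ : LipschitzWith L ψ) (hψ0 : ψ 0 = 0) {r₀ : ℝ}
    (hr₀ : 0 < r₀) (r : ℝ) {z w : ℂ} (hz : r₀ + 2 * ‖w‖ < ‖z‖) :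
    |(annulus r₀ r).indicator (fun z => ψ z⁻¹) z -
        (annulus r₀ r).indicator (fun z => ψ z⁻¹) (z + w)| ≤
      2 * L * ‖w‖ * (‖z‖ ^ 2)⁻¹ +
      (annulus (r - ‖w‖) (r + ‖w‖)).indicator (fun _ => 6 * L / (r + ‖w‖)) z := by
  set g := (annulus r₀ r).indicator (fun z => ψ z⁻¹)
  have h2w : 2 * ‖w‖ ≤ ‖z‖ := by linarith
  have hz0 : 0 < ‖z‖ := by linarith [norm_nonneg w]
  have hzw := half_norm_le_norm_add h2w
  have hfar : 0 ≤ 2 * (L : ℝ) * ‖w‖ * (‖z‖ ^ 2)⁻¹ := by positivity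
  by_cases hs : z ∈ annulus (r - ‖w‖) (r + ‖w‖)
  · rw [indicator_of_mem hs]
    have hg : ∀ z, |g z| ≤ L / ‖z‖ := fun z =>
      (norm_indicator_le_norm_self (fun z => ψ z⁻¹) z).trans (hψ.abs_comp_inv_le hψ0 z)
    have hgw : L / ‖z + w‖ ≤ 2 * L / ‖z‖ := by
      rw [div_le_div_iff₀ (by linarith) hz0]
      nlinarith [L.2]
    have hshell : L / ‖z‖ + 2 * L / ‖z‖ ≤ 6 * L / (r + ‖w‖) := by
      rw [← add_div, div_le_div_iff₀ hz0 (by linarith [hs.2])]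
      nlinarith [hs.1, L.2]
    linarith [abs_sub (g z) (g (z + w)), hg z, hg (z + w)]
  rw [indicator_of_notMem hs, add_zero]
  have hiff := mem_annulus_add_iff (r₀ := r₀) (by linarith [norm_nonneg w]) hs
  by_cases hA : z ∈ annulus r₀ r
  · rw [show g z = ψ z⁻¹ from indicator_of_mem hA _,
      show g (z + w) = ψ (z + w)⁻¹ from indicator_of_mem (hiff.2 hA) _]
    exact hψ.abs_comp_inv_sub_comp_inv_add_le (norm_pos_iff.1 hz0) h2w
  · rwa [show g z = 0 from indicator_of_notMem hA _,
      show g (z + w) = 0 from indicator_of_notMem (mt hiff.1 hA) _, sub_zero, abs_zero]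

lemma abs_indicator_annulus_sub_le (hψ : LipschitzWith L ψ) (hψ0 : ψ 0 = 0) {r₀ : ℝ}
    (hr₀ : 0 < r₀) (r : ℝ) (z w : ℂ) :
    |(annulus r₀ r).indicator (fun z => ψ z⁻¹) z -
        (annulus r₀ r).indicator (fun z => ψ z⁻¹) (z + w)| ≤
      (closedBall 0 (r₀ + 2 * ‖w‖)).indicator (fun _ => 2 * L / r₀) z +
      {z | r₀ + 2 * ‖w‖ < ‖z‖}.indicator (fun z => 2 * L * ‖w‖ * (‖z‖ ^ 2)⁻¹) z +
      (annulus (r - ‖w‖) (r + ‖w‖)).indicator (fun _ => 6 * L / (r + ‖w‖)) z := by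
  have hshell : 0 ≤ (annulus (r - ‖w‖) (r + ‖w‖)).indicator (fun _ => 6 * L / (r + ‖w‖)) z :=
    indicator_nonneg (fun _ hs => div_nonneg (by positivity) ((norm_nonneg _).trans hs.2)) z
  by_cases hz : ‖z‖ ≤ r₀ + 2 * ‖w‖
  · have hfar : 0 ≤ {z | r₀ + 2 * ‖w‖ < ‖z‖}.indicator
        (fun z => 2 * L * ‖w‖ * (‖z‖ ^ 2)⁻¹) z :=
      indicator_nonneg (fun z _ => by positivity) z
    rw [indicator_of_mem (mem_closedBall_zero_iff.2 hz)]
    have h2L : 2 * (L : ℝ) / r₀ = L / r₀ + L / r₀ := by ring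
    linarith [abs_sub ((annulus r₀ r).indicator (fun z => ψ z⁻¹) z)
      ((annulus r₀ r).indicator (fun z => ψ z⁻¹) (z + w)),
      hψ.abs_indicator_annulus_le hψ0 hr₀ r z, hψ.abs_indicator_annulus_le hψ0 hr₀ r (z + w)]
  push Not at hz
  rw [indicator_of_notMem (fun h => (mem_closedBall_zero_iff.1 h).not_gt hz),
    indicator_of_mem (show z ∈ {z | r₀ + 2 * ‖w‖ < ‖z‖} from hz), zero_add]
  exact hψ.abs_indicator_annulus_sub_le_of_lt hψ0 hr₀ r hz

lemma integrableOn_annulus {μ : Measure ℂ} [IsFiniteMeasureOnCompacts μ]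
    (hψ : LipschitzWith L ψ) (hψ0 : ψ 0 = 0) {r₀ : ℝ} (hr₀ : 0 < r₀) (r : ℝ) :
    IntegrableOn (fun z => ψ z⁻¹) (annulus r₀ r) μ :=
  Measure.integrableOn_of_bounded (M := L / r₀)
    ((measure_mono (annulus_subset_closedBall_s9 r₀ r)).trans_lt measure_closedBall_lt_top).ne
    (hψ.continuous.measurable.comp measurable_inv).aestronglyMeasurable
    (ae_restrict_of_forall_mem (measurableSet_annulus_s9 r₀ r) fun z hz =>
      (hψ.abs_comp_inv_le hψ0 z).trans (div_le_div_of_nonneg_left L.2 hr₀ hz.1.le))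

end LipschitzWith

lemma setIntegral_sub_setIntegral_map_add (μ : Measure ℂ) (w : ℂ) {s : Set ℂ}
    (hs : MeasurableSet s) {f : ℂ → ℝ} (hf : IntegrableOn f s μ)
    (hf' : IntegrableOn f s (μ.map (· + w))) :
    ∫ z in s, f z ∂μ - ∫ z in s, f z ∂(μ.map (· + w)) =
      ∫ z, (s.indicator f z - s.indicator f (z + w)) ∂μ := by
  have he := measurableEmbedding_addRight w
  rw [← integral_indicator hs, ← integral_indicator hs, he.integral_map]
  exact (integral_sub (hf.integrable_indicator hs)
    (he.integrable_map_iff.1 (hf'.integrable_indicator hs))).symm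

namespace FiniteUpperDensity

variable {ν : Measure ℂ} [IsFiniteMeasureOnCompacts ν]
lemma exists_measureReal_closedBall_le (hν : FiniteUpperDensity ν)
    {t₀ : ℝ} (ht₀ : 0 < t₀) : ∃ C, ∀ t ≥ t₀, ν.real (closedBall 0 t) ≤ C * t := by
  obtain ⟨C, T, hT⟩ : ∃ C T, ∀ t ≥ T, ν.real (closedBall 0 t) ≤ C * t := by
    obtain ⟨C, hC⟩ := hν
    exact ⟨C, eventually_atTop.1 hC⟩
  set M := ν.real (closedBall (0 : ℂ) (max T t₀))
  have hM : 0 ≤ M / t₀ := by positivity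
  refine ⟨max C 0 + M / t₀, fun t ht => ?_⟩
  have ht0 : 0 ≤ t := by linarith
  rcases le_total T t with hTt | htT
  · calc ν.real (closedBall 0 t) ≤ C * t := hT t hTt
      _ ≤ (max C 0 + M / t₀) * t :=
        mul_le_mul_of_nonneg_right ((le_max_left C 0).trans (le_add_of_nonneg_right hM)) ht0
  · calc ν.real (closedBall 0 t) ≤ M :=
          measureReal_mono (closedBall_subset_closedBall (le_max_of_le_left htT))
            measure_closedBall_lt_top.ne
      _ ≤ M / t₀ * t := by rw [div_mul_eq_mul_div, le_div_iff₀ ht₀]; gcongr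
      _ ≤ (max C 0 + M / t₀) * t :=
        mul_le_mul_of_nonneg_right (le_add_of_nonneg_left (le_max_right C 0)) ht0

lemma integrableOn_inv_sq (hν : FiniteUpperDensity ν) {R : ℝ} (hR : 0 < R) :
    IntegrableOn (fun z : ℂ => (‖z‖ ^ 2)⁻¹) {z | R < ‖z‖} ν := by
  obtain ⟨C, hC⟩ := hν.exists_measureReal_closedBall_le hR
  set S : ℕ → Set ℂ := fun n => (‖·‖) ⁻¹' Icc (2 ^ n * R) (2 ^ (n + 1) * R)
  have hbound : ∀ n, ∀ z ∈ S n, ‖(‖z‖ ^ 2)⁻¹‖ ≤ ((2 ^ n * R) ^ 2)⁻¹ := fun n z hz => by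
    rw [Real.norm_of_nonneg (by positivity)]
    exact inv_anti₀ (by positivity) (pow_le_pow_left₀ (by positivity) hz.1 2)
  have hfin : ∀ n, ν (S n) < ⊤ := fun n =>
    (measure_mono fun z hz => mem_closedBall_zero_iff.2 hz.2).trans_lt measure_closedBall_lt_top
  have hpiece : ∀ n, IntegrableOn (fun z : ℂ => (‖z‖ ^ 2)⁻¹) (S n) ν := fun n =>
    Measure.integrableOn_of_bounded (hfin n).ne (by fun_prop)
      (ae_restrict_of_forall_mem (measurableSet_Icc.preimage measurable_norm) (hbound n))
  have hsum : ∀ n, ∫ z in S n, ‖(‖z‖ ^ 2)⁻¹‖ ∂ν ≤ 2 * C / R * (1 / 2) ^ n := fun n => by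
    have hmeas : ν.real (S n) ≤ C * (2 ^ (n + 1) * R) :=
      (measureReal_mono (fun z hz => mem_closedBall_zero_iff.2 hz.2)
        measure_closedBall_lt_top.ne).trans
        (hC _ (le_mul_of_one_le_left hR.le (one_le_pow₀ one_le_two)))
    calc ∫ z in S n, ‖(‖z‖ ^ 2)⁻¹‖ ∂ν ≤ ((2 ^ n * R) ^ 2)⁻¹ * ν.real (S n) := by
          refine (le_abs_self _).trans ?_
          rw [← Real.norm_eq_abs]
          exact norm_setIntegral_le_of_norm_le_const (hfin n) fun z hz => by
            rw [norm_norm]; exact hbound n z hz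
      _ ≤ ((2 ^ n * R) ^ 2)⁻¹ * (C * (2 ^ (n + 1) * R)) := by gcongr
      _ = 2 * C / R * (1 / 2) ^ n := by rw [one_div_pow, pow_succ]; field_simp; ring
  refine (integrableOn_iUnion_of_summable_integral_norm hpiece
    (Summable.of_nonneg_of_le (fun n => integral_nonneg fun _ => norm_nonneg _) hsum
      (summable_geometric_two.mul_left _))).mono_set fun z (hz : R < ‖z‖) => ?_
  obtain ⟨n, hn⟩ := exists_nat_pow_near ((one_le_div hR).2 hz.le) (one_lt_two (α := ℝ))
  exact mem_iUnion.2 ⟨n, (le_div_iff₀ hR).1 hn.1, ((div_lt_iff₀ hR).1 hn.2).le⟩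

theorem exists_abs_setIntegral_annulus_sub_map_add_le
    (hν : FiniteUpperDensity ν) {ψ : ℂ → ℝ} {L : ℝ≥0} (hψ : LipschitzWith L ψ)
    (hψ0 : ψ 0 = 0) (w : ℂ) {r₀ : ℝ} (hr₀ : 0 < r₀) :
    ∃ C, ∀ r ≥ r₀, |∫ z in annulus r₀ r, ψ z⁻¹ ∂ν -
      ∫ z in annulus r₀ r, ψ z⁻¹ ∂(ν.map (· + w))| ≤ C := by
  set R := r₀ + 2 * ‖w‖
  have hR : 0 < R := by positivity
  have : IsFiniteMeasureOnCompacts (ν.map (· + w)) :=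
    Measure.IsFiniteMeasureOnCompacts.map ν (Homeomorph.addRight w)
  obtain ⟨C₁, hC₁⟩ := hν.exists_measureReal_closedBall_le hr₀
  refine ⟨ν.real (closedBall 0 R) * (2 * L / r₀) +
    2 * L * ‖w‖ * ∫ z in {z | R < ‖z‖}, (‖z‖ ^ 2)⁻¹ ∂ν + 6 * L * C₁, fun r hr => ?_⟩
  have hRs : MeasurableSet {z : ℂ | R < ‖z‖} := measurableSet_lt measurable_const measurable_norm
  set φ₁ : ℂ → ℝ := (closedBall 0 R).indicator fun _ => 2 * L / r₀
  set φ₂ : ℂ → ℝ := {z | R < ‖z‖}.indicator fun z => 2 * L * ‖w‖ * (‖z‖ ^ 2)⁻¹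
  set φ₃ : ℂ → ℝ := (annulus (r - ‖w‖) (r + ‖w‖)).indicator fun _ => 6 * L / (r + ‖w‖)
  have hi₁ : Integrable φ₁ ν :=
    (integrableOn_const measure_closedBall_lt_top.ne).integrable_indicator measurableSet_closedBall
  have hi₂ : Integrable φ₂ ν :=
    IntegrableOn.integrable_indicator ((hν.integrableOn_inv_sq hR).const_mul _) hRs
  have hi₃ : Integrable φ₃ ν := (integrableOn_const ((measure_mono
    (annulus_subset_closedBall_s9 _ _)).trans_lt measure_closedBall_lt_top).ne).integrable_indicator
    (measurableSet_annulus_s9 _ _)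
  have hshell : ν.real (annulus (r - ‖w‖) (r + ‖w‖)) * (6 * L / (r + ‖w‖)) ≤ 6 * L * C₁ := by
    have hrw : 0 < r + ‖w‖ := by linarith [norm_nonneg w]
    calc _ ≤ C₁ * (r + ‖w‖) * (6 * L / (r + ‖w‖)) := by
          gcongr
          exact (measureReal_mono (annulus_subset_closedBall_s9 _ _)
            measure_closedBall_lt_top.ne).trans (hC₁ _ (by linarith [norm_nonneg w]))
      _ = 6 * L * C₁ := by field_simp
  rw [setIntegral_sub_setIntegral_map_add ν w (measurableSet_annulus_s9 r₀ r)
    (hψ.integrableOn_annulus hψ0 hr₀ r) (hψ.integrableOn_annulus hψ0 hr₀ r), ← Real.norm_eq_abs]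
  calc _ ≤ ∫ z, (φ₁ + φ₂ + φ₃) z ∂ν :=
        norm_integral_le_of_norm_le ((hi₁.add hi₂).add hi₃)
          (ae_of_all _ fun z => hψ.abs_indicator_annulus_sub_le hψ0 hr₀ r z w)
    _ = ν.real (closedBall 0 R) * (2 * L / r₀) +
          2 * L * ‖w‖ * ∫ z in {z | R < ‖z‖}, (‖z‖ ^ 2)⁻¹ ∂ν +
          ν.real (annulus (r - ‖w‖) (r + ‖w‖)) * (6 * L / (r + ‖w‖)) := by
      rw [integral_add' (hi₁.add hi₂) hi₃, integral_add' hi₁ hi₂, integral_indicator_const _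
        measurableSet_closedBall, integral_indicator hRs, integral_const_mul,
        integral_indicator_const _ (measurableSet_annulus_s9 _ _), smul_eq_mul, smul_eq_mul]
    _ ≤ _ := by gcongr

end FiniteUpperDensity

lemma abs_add_sub_add_le {α : Type*} [AddCommGroup α] [LinearOrder α] [IsOrderedAddMonoid α]
    (a a' b b' : α) : |(a + b') - (b + a')| ≤ |a - a'| + |b - b'| := by
  rw [show a + b' - (b + a') = (a - a') - (b - b') by abel]
  exact abs_sub _ _

/-- For a signed measure `ν = νp - νm` of finite upper density and
`w ∈ ℂ`, the right and left logarithmic functions of `ν - ν_{→w}` over the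
annuli `{r₀ < |z| ≤ r}` remain uniformly bounded in `r ≥ r₀`. Here
`ν_{→w} = (map (·+w) νp) - (map (·+w) νm)`, so that
`ν - ν_{→w} = (νp + map (·+w) νm) - (νm + map (·+w) νp)`. -/
theorem stmt9 (νp νm : Measure ℂ)
    [IsFiniteMeasureOnCompacts νp] [IsFiniteMeasureOnCompacts νm]
    (hp : FiniteUpperDensity νp) (hm : FiniteUpperDensity νm) (w : ℂ) :
    ∀ r0 : ℝ, 0 < r0 → ∃ C : ℝ, ∀ r ≥ r0,
      |(ellP νp r0 r + ellP (Measure.map (· + w) νm) r0 r) -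
        (ellP νm r0 r + ellP (Measure.map (· + w) νp) r0 r)| +
      |(ellM νp r0 r + ellM (Measure.map (· + w) νm) r0 r) -
        (ellM νm r0 r + ellM (Measure.map (· + w) νp) r0 r)| ≤ C := by
  intro r0 hr0
  have hP : LipschitzWith 1 fun u : ℂ => max u.re 0 := RCLike.lipschitzWith_re.max_const 0
  have hM : LipschitzWith 1 fun u : ℂ => max (-u.re) 0 :=
    RCLike.lipschitzWith_re.neg.max_const 0
  obtain ⟨C₁, h₁⟩ := hp.exists_abs_setIntegral_annulus_sub_map_add_le hP (by simp) w hr0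
  obtain ⟨C₂, h₂⟩ := hm.exists_abs_setIntegral_annulus_sub_map_add_le hP (by simp) w hr0
  obtain ⟨C₃, h₃⟩ := hp.exists_abs_setIntegral_annulus_sub_map_add_le hM (by simp) w hr0
  obtain ⟨C₄, h₄⟩ := hm.exists_abs_setIntegral_annulus_sub_map_add_le hM (by simp) w hr0
  refine ⟨C₁ + C₂ + (C₃ + C₄), fun r hr => ?_⟩
  simp only [ellP, ellM, one_div]
  exact add_le_add
    ((abs_add_sub_add_le _ _ _ _).trans (add_le_add (h₁ r hr) (h₂ r hr)))
    ((abs_add_sub_add_le _ _ _ _).trans (add_le_add (h₃ r hr) (h₄ r hr)))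
end
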